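/- arXiv:1211.1128 — 2 statements merged into one kernel-verified Lean document; each statement's English description precedes it below -/
import Mathlib

section
/- For every s ∈ ℂ^{μ_A−1} and every s_μ ∈ ℂ∖{0}, the set of critical points {x ∈ ℂ^3 : ∂F/∂x_1(x) = ∂F/∂x_2(x) = ∂F/∂x_3(x) = 0} of the polynomial F(x) := F_A(x; s, s_μ) is finite. -/
open MvPolynomial

/-- The universal unfolding `F_A` of the affine cusp polynomial of type
`A = (a 0, a 1, a 2)`. -/
noncomputable def cuspUnfolding (a : Fin 3 → ℕ) (s1 : ℂ) (sij : Fin 3 → ℕ → ℂ) (sμ : ℂ) :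
    MvPolynomial (Fin 3) ℂ :=
  (∑ i, X i ^ a i) - C sμ⁻¹ * (X 0 * X 1 * X 2) + C s1
    + ∑ i, ∑ j ∈ Finset.Ico 1 (a i), C (sij i j) * X i ^ j

/-!
With `w = s_μ⁻¹` and `P, Q, R` the one-variable parts of `F_A`, the critical equations read
`P'(x₀) = w x₁x₂`, `Q'(x₁) = w x₀x₂`, `R'(x₂) = w x₀x₁`. Since `χ_A > 0`, either `a₀ = 1`, or
`a₀ = 2` and `(a₁, a₂)` is `(2, n)`, `(3, 3)`, `(3, 4)` or `(3, 5)`.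

If `a₀ = 1`, then `P' = 1`, so `x₁x₂ = 1/w` and `x₁Q'(x₁) = x₂R'(x₂)`; substituting
`x₂ = 1/(w x₁)` and clearing denominators gives a nonzero polynomial equation for `x₁`, and `x₁`
determines `x`.

If `a₀ = 2`, then `x₀` is an affine function of `x₁x₂`, and the other two equations become two
quadratics in `x₁` whose coefficients are polynomials in `x₂`. Their resultant has degree
`a₂ + 4` in `x₂`: the bound on `(a₁, a₂)` is exactly what keeps the square term of the
resultant below that degree. So `x₂` takes finitely many values, and for each of them so does
`x₁`.
-/

theorem Nat.eq_one_or_eq_two_of_one_lt_inv_add_inv_add_inv {a b c : ℕ} (ha : 0 < a)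
    (hab : a ≤ b) (hbc : b ≤ c) (h : 1 < (1 : ℚ) / a + 1 / b + 1 / c) :
    a = 1 ∨ a = 2 ∧ b ≤ 3 ∧ (b = 3 → c ≤ 5) := by
  have inv_le {m n : ℕ} (hm : 0 < m) (hmn : m ≤ n) : (n : ℚ)⁻¹ ≤ (m : ℚ)⁻¹ :=
    inv_anti₀ (by exact_mod_cast hm) (by exact_mod_cast hmn)
  simp only [one_div] at h
  have hb := inv_le ha hab
  have hc := inv_le (ha.trans_le hab) hbc
  have ha2 : a ≤ 2 := by
    by_contra! h3
    linarith [inv_le (m := 3) (by norm_num) h3]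
  obtain rfl | rfl : a = 1 ∨ a = 2 := by omega
  · exact .inl rfl
  have hb3 : b ≤ 3 := by
    by_contra! h4
    linarith [inv_le (m := 4) (by norm_num) h4]
  refine .inr ⟨rfl, hb3, ?_⟩
  rintro rfl
  by_contra! h6
  linarith [inv_le (m := 6) (by norm_num) h6]

def quadraticResultant {R : Type*} [CommRing R] (a₁ b₁ c₁ a₂ b₂ c₂ : R) : R :=
  (a₁ * c₂ - a₂ * c₁) ^ 2 - (a₁ * b₂ - a₂ * b₁) * (b₁ * c₂ - b₂ * c₁)

theorem quadraticResultant_eq_zero_of_common_root {R : Type*} [CommRing R] [NoZeroDivisors R]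
    {a₁ b₁ c₁ a₂ b₂ c₂ y : R} (h₁ : a₁ * y ^ 2 + b₁ * y + c₁ = 0)
    (h₂ : a₂ * y ^ 2 + b₂ * y + c₂ = 0) :
    quadraticResultant a₁ b₁ c₁ a₂ b₂ c₂ = 0 := by
  have hlin : (a₁ * b₂ - a₂ * b₁) * y = -(a₁ * c₂ - a₂ * c₁) := by
    linear_combination a₁ * h₂ - a₂ * h₁
  have hy : y * ((b₁ * c₂ - b₂ * c₁) + (a₁ * c₂ - a₂ * c₁) * y) = 0 := by
    linear_combination c₂ * h₁ - c₁ * h₂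
  rcases mul_eq_zero.mp hy with rfl | hy
  · have hc₁ : c₁ = 0 := by linear_combination h₁
    have hc₂ : c₂ = 0 := by linear_combination h₂
    simp [quadraticResultant, hc₁, hc₂]
  · unfold quadraticResultant
    linear_combination (-(a₁ * b₂ - a₂ * b₁)) * hy + (a₁ * c₂ - a₂ * c₁) * hlin

namespace Polynomial

variable {K : Type*} [Field K]

theorem finite_setOf_mul_eq_and_eval_eq {c : K} (hc : c ≠ 0) {A : K[X]} (hA : 0 < A.natDegree)
    (B : K[X]) :
    {yz : K × K | yz.1 * yz.2 = c ∧ A.eval yz.1 = B.eval yz.2}.Finite := by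
  set N := B.natDegree
  -- `y ^ N * B.eval (c / y) = c ^ N * (reflect N B).eval (y / c)`, of degree at most `N` in `y`
  set P : K[X] := X ^ N * A - C (c ^ N) * (reflect N B).comp (C c⁻¹ * X)
  have hP : P ≠ 0 := by
    have hA0 : A ≠ 0 := ne_zero_of_natDegree_gt hA
    have hlt : (C (c ^ N) * (reflect N B).comp (C c⁻¹ * X)).natDegree < (X ^ N * A).natDegree := by
      rw [natDegree_X_pow_mul N hA0]
      calc _ ≤ N := by
            refine natDegree_C_mul_le _ _ |>.trans <| natDegree_comp_le.trans ?_
            have hr : (reflect N B).natDegree ≤ N := natDegree_reflect_le.trans (by simp [N])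
            have hX : (C c⁻¹ * X).natDegree ≤ 1 := by compute_degree
            simpa using Nat.mul_le_mul hr hX
        _ < _ := by omega
    refine ne_zero_of_natDegree_gt (n := 0) ?_
    rw [natDegree_sub_eq_left_of_natDegree_lt hlt, natDegree_X_pow_mul N hA0]
    omega
  refine ((finite_setOfPred_isRoot hP).image fun y => (y, c / y)).subset ?_
  rintro ⟨y, z⟩ ⟨hyz, hAB⟩
  have hy : y ≠ 0 := by rintro rfl; simp [hc.symm] at hyz
  obtain rfl : z = c / y := by field_simp; linear_combination hyz
  refine ⟨y, ?_, rfl⟩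
  have : Invertible (c / y) := invertibleOfNonzero (div_ne_zero hc hy)
  have hB := eval₂_reflect_mul_pow (RingHom.id K) (c / y) N B le_rfl
  simp only [eval₂_id, invOf_eq_inv, inv_div] at hB
  have hpow : y ^ N * (c / y) ^ N = c ^ N := by rw [← mul_pow, mul_div_cancel₀ _ hy]
  simp only [Set.mem_ofPred_eq, IsRoot, P, eval_sub, eval_mul, eval_pow, eval_X, eval_C, eval_comp,
    inv_mul_eq_div]
  linear_combination y ^ N * hAB - y ^ N * hB + eval (y / c) (reflect N B) * hpow

/-- The quadratics in `y` of `finite_setOf_cusp_quadratics`, with coefficients polynomial in `z`: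
their resultant has leading term `-α * w ^ 6 * r.leadingCoeff * z ^ (r.natDegree + 5)`. -/
theorem cusp_quadraticResultant_ne_zero {α e w : K} (hα : α ≠ 0) (hw : w ≠ 0) (q₀ q₁ q₂ : K)
    {r : K[X]} (hr : r ≠ 0) (hqr : q₂ = 0 ∨ r.natDegree ≤ 4) :
    quadraticResultant (C (α * q₂)) (C (α * q₁) - C (w ^ 2) * X ^ 2) (C (α * q₀) + C (w * e) * X)
      (C (w ^ 2) * X) (C (-(w * e))) (-(C α * r)) ≠ 0 := by
  set U : K[X] := C (α * q₂) * -(C α * r) - C (w ^ 2) * X * (C (α * q₀) + C (w * e) * X)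
  set S : K[X] := C (α * q₂) * C (-(w * e)) - C (w ^ 2) * X * (C (α * q₁) - C (w ^ 2) * X ^ 2)
  set T : K[X] := (C (α * q₁) - C (w ^ 2) * X ^ 2) * -(C α * r)
    - C (-(w * e)) * (C (α * q₀) + C (w * e) * X)
  have hS : S.natDegree = 3 := by simp only [S]; compute_degree!
  have hT : T.natDegree = 2 + r.natDegree := by
    simp only [T]
    compute_degree!
    · have : 2 + r.natDegree ≠ 1 := by omega
      simp [this, hα, hw, hr]
    all_goals omega
  have hU : 2 * U.natDegree < r.natDegree + 5 := by
    rcases hqr with rfl | hn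
    · have : U.natDegree ≤ 2 := by
        simp only [U, mul_zero, map_zero, zero_mul, zero_sub, natDegree_neg]
        compute_degree
      omega
    · have : U.natDegree ≤ max r.natDegree 2 := by simp only [U]; compute_degree
      omega
  have hST : (S * T).natDegree = r.natDegree + 5 := by
    rw [natDegree_mul (ne_zero_of_natDegree_gt (n := 0) (by omega))
      (ne_zero_of_natDegree_gt (n := 0) (by omega)), hS, hT]
    omega
  refine ne_zero_of_natDegree_gt (n := 0) ?_
  change 0 < (U ^ 2 - S * T).natDegree
  rw [natDegree_sub_eq_right_of_natDegree_lt, hST]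
  · omega
  · rw [hST]
    exact natDegree_pow_le.trans_lt (by omega)

theorem finite_setOf_cusp_quadratics {α e w : K} (hα : α ≠ 0) (hw : w ≠ 0) {q r : K[X]}
    (hq : q ≠ 0) (hq₂ : q.natDegree ≤ 2) (hr : r ≠ 0) (hqr : q.natDegree = 2 → r.natDegree ≤ 4) :
    {yz : K × K | α * q.eval yz.1 = w * yz.2 * (w * yz.1 * yz.2 - e) ∧
      α * r.eval yz.2 = w * yz.1 * (w * yz.1 * yz.2 - e)}.Finite := by
  have hqr' : q.coeff 2 = 0 ∨ r.natDegree ≤ 4 := by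
    rcases hq₂.lt_or_eq with hlt | heq
    · exact .inl (coeff_eq_zero_of_natDegree_lt hlt)
    · exact .inr (hqr heq)
  apply Set.Finite.of_finite_fibers Prod.snd
  · refine (finite_setOfPred_isRoot
      (cusp_quadraticResultant_ne_zero hα hw (e := e) (q.coeff 0) (q.coeff 1) (q.coeff 2) hr
        hqr')).subset ?_
    rintro _ ⟨⟨y, z⟩, ⟨h₁, h₂⟩, rfl⟩
    have hq_eval : q.eval y = q.coeff 2 * y ^ 2 + q.coeff 1 * y + q.coeff 0 := by
      rw [eval_eq_sum_range' (n := 3) (by omega)]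
      simp only [Finset.sum_range_succ, Finset.range_one, Finset.sum_singleton, pow_zero, mul_one,
        pow_one]
      ring
    have := quadraticResultant_eq_zero_of_common_root (y := y)
      (a₁ := α * q.coeff 2) (b₁ := α * q.coeff 1 - w ^ 2 * z ^ 2) (c₁ := α * q.coeff 0 + w * e * z)
      (a₂ := w ^ 2 * z) (b₂ := -(w * e)) (c₂ := -(α * r.eval z))
      (by linear_combination h₁ - α * hq_eval) (by linear_combination -h₂)
    simpa [quadraticResultant] using this
  · rintro z -
    rcases eq_or_ne z 0 with rfl | hz
    · refine ((finite_setOfPred_isRoot hq).image (·, 0)).subset ?_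
      rintro ⟨y, _⟩ ⟨⟨h₁, -⟩, rfl⟩
      exact ⟨y, by simpa [hα] using h₁, rfl⟩
    · have hdeg : (C (w ^ 2 * z) * X ^ 2 - C (w * e) * X - C (α * r.eval z)).natDegree = 2 := by
        compute_degree!
      have hP : C (w ^ 2 * z) * X ^ 2 - C (w * e) * X - C (α * r.eval z) ≠ 0 :=
        ne_zero_of_natDegree_gt (n := 1) (by omega)
      refine ((finite_setOfPred_isRoot hP).image (·, z)).subset ?_
      rintro ⟨y, _⟩ ⟨⟨-, h₂⟩, rfl⟩
      refine ⟨y, ?_, rfl⟩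
      simp only [Set.mem_ofPred_eq, IsRoot, eval_sub, eval_mul, eval_C, eval_pow, eval_X]
      linear_combination -h₂

/-- The critical set of `P(x₀) + Q(x₁) + R(x₂) - w x₀x₁x₂`, where `p, q, r` are `P', Q', R'`. -/
def cuspCriticalSet (p q r : K[X]) (w : K) : Set (Fin 3 → K) :=
  {x | p.eval (x 0) = w * (x 1 * x 2) ∧ q.eval (x 1) = w * (x 0 * x 2) ∧
    r.eval (x 2) = w * (x 0 * x 1)}

theorem cuspCriticalSet_finite_of_const {u w : K} (hu : u ≠ 0) (hw : w ≠ 0) {q : K[X]} (hq : q ≠ 0)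
    (r : K[X]) : (cuspCriticalSet (C u) q r w).Finite := by
  have hXq : 0 < (X * q).natDegree := by rw [natDegree_X_mul hq]; omega
  refine ((finite_setOf_mul_eq_and_eval_eq (div_ne_zero hu hw) hXq (X * r)).image
    fun yz => ![yz.1 * q.eval yz.1 / u, yz.1, yz.2]).subset ?_
  rintro x ⟨h₀, h₁, h₂⟩
  rw [eval_C] at h₀
  refine ⟨(x 1, x 2), ⟨?_, ?_⟩, ?_⟩
  · field_simp
    linear_combination -h₀
  · simp only [eval_mul, eval_X]
    linear_combination x 1 * h₁ - x 2 * h₂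
  · ext i
    fin_cases i
    · show x 1 * q.eval (x 1) / u = x 0
      field_simp
      linear_combination x 1 * h₁ - x 0 * h₀
    all_goals rfl

theorem cuspCriticalSet_finite_of_linear {α e w : K} (hα : α ≠ 0) (hw : w ≠ 0) {q r : K[X]}
    (hq : q ≠ 0) (hq₂ : q.natDegree ≤ 2) (hr : r ≠ 0) (hqr : q.natDegree = 2 → r.natDegree ≤ 4) :
    (cuspCriticalSet (C α * X + C e) q r w).Finite := by
  refine ((finite_setOf_cusp_quadratics (e := e) hα hw hq hq₂ hr hqr).image
    fun yz => ![(w * yz.1 * yz.2 - e) / α, yz.1, yz.2]).subset ?_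
  rintro x ⟨h₀, h₁, h₂⟩
  simp only [eval_add, eval_mul, eval_C, eval_X] at h₀
  have hx₀ : α * x 0 = w * x 1 * x 2 - e := by linear_combination h₀
  refine ⟨(x 1, x 2), ⟨?_, ?_⟩, ?_⟩
  · linear_combination α * h₁ + w * x 2 * hx₀
  · linear_combination α * h₂ + w * x 1 * hx₀
  · ext i
    fin_cases i
    · show (w * x 1 * x 2 - e) / α = x 0
      field_simp
      linear_combination -hx₀
    all_goals rfl

noncomputable def cuspSummand (a : ℕ) (s : ℕ → K) : K[X] :=
  X ^ a + ∑ j ∈ Finset.Ico 1 a, C (s j) * X ^ j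

theorem natDegree_cuspSummand (a : ℕ) (s : ℕ → K) : (cuspSummand a s).natDegree = a := by
  rcases Nat.eq_zero_or_pos a with rfl | ha
  · simp [cuspSummand]
  have hlt : (∑ j ∈ Finset.Ico 1 a, C (s j) * X ^ j).natDegree < (X ^ a : K[X]).natDegree := by
    rw [natDegree_X_pow]
    refine (natDegree_sum_le_of_forall_le _ _ (n := a - 1) fun j hj => ?_).trans_lt (by omega)
    exact (natDegree_C_mul_X_pow_le _ _).trans (by grind)
  rw [cuspSummand, natDegree_add_eq_left_of_natDegree_lt hlt, natDegree_X_pow]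

theorem derivative_cuspSummand_one (s : ℕ → K) : derivative (cuspSummand 1 s) = C 1 := by
  simp [cuspSummand]

theorem derivative_cuspSummand_two (s : ℕ → K) :
    derivative (cuspSummand 2 s) = C 2 * X + C (s 1) := by
  simp [cuspSummand, one_add_one_eq_two]

theorem natDegree_derivative_cuspSummand [CharZero K] (a : ℕ) (s : ℕ → K) :
    (derivative (cuspSummand a s)).natDegree = a - 1 := by
  rw [natDegree_derivative, natDegree_cuspSummand]

theorem derivative_cuspSummand_ne_zero [CharZero K] {a : ℕ} (ha : 0 < a) (s : ℕ → K) :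
    derivative (cuspSummand a s) ≠ 0 := by
  rw [derivative_ne_zero, natDegree_cuspSummand]
  exact ha.ne'

end Polynomial

theorem MvPolynomial.eval_polynomial_aeval_X {σ R : Type*} [CommRing R] (x : σ → R) (i : σ)
    (p : Polynomial R) : eval x (Polynomial.aeval (X i) p) = p.eval (x i) := by
  induction p using Polynomial.induction_on <;> simp_all

theorem cuspUnfolding_eq_sum_aeval_cuspSummand (a : Fin 3 → ℕ) (s1 : ℂ) (sij : Fin 3 → ℕ → ℂ)
    (sμ : ℂ) :
    cuspUnfolding a s1 sij sμ =
      ∑ i, Polynomial.aeval (X i) (Polynomial.cuspSummand (a i) (sij i))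
        - C sμ⁻¹ * (X 0 * X 1 * X 2) + C s1 := by
  simp only [cuspUnfolding, Polynomial.cuspSummand, map_add, map_sum, map_mul, map_pow,
    Polynomial.aeval_X, Polynomial.aeval_C, Finset.sum_add_distrib, MvPolynomial.algebraMap_eq]
  ring

theorem setOf_eval_pderiv_cuspUnfolding_eq (a : Fin 3 → ℕ) (s1 : ℂ) (sij : Fin 3 → ℕ → ℂ)
    (sμ : ℂ) :
    {x : Fin 3 → ℂ | ∀ i : Fin 3, eval x (pderiv i (cuspUnfolding a s1 sij sμ)) = 0} =
      Polynomial.cuspCriticalSet (Polynomial.derivative (Polynomial.cuspSummand (a 0) (sij 0)))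
        (Polynomial.derivative (Polynomial.cuspSummand (a 1) (sij 1)))
        (Polynomial.derivative (Polynomial.cuspSummand (a 2) (sij 2))) sμ⁻¹ := by
  ext x
  simp [cuspUnfolding_eq_sum_aeval_cuspSummand, Fin.forall_fin_succ, Polynomial.cuspCriticalSet,
    Fin.sum_univ_three, pderiv_X, Pi.single_apply, eval_polynomial_aeval_X, sub_eq_zero,
    mul_comm (x 2)]

/-- For every choice of parameters `s ∈ ℂ^{μ_A−1}`, `s_μ ∈ ℂ∖{0}`, the set of critical points
of the polynomial `F(x) = F_A(x; s, s_μ)` is finite (tameness of the universal unfolding). -/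
theorem criticalSet_finite
    (a : Fin 3 → ℕ) (ha : ∀ i, 0 < a i)
    (hord : a 0 ≤ a 1 ∧ a 1 ≤ a 2)
    (hχ : 1 < (1 : ℚ) / (a 0) + 1 / (a 1) + 1 / (a 2))
    (s1 : ℂ) (sij : Fin 3 → ℕ → ℂ) (sμ : ℂ) (hsμ : sμ ≠ 0) :
    {x : Fin 3 → ℂ | ∀ i : Fin 3, eval x (pderiv i (cuspUnfolding a s1 sij sμ)) = 0}.Finite := by
  open Polynomial in
  rw [setOf_eval_pderiv_cuspUnfolding_eq]
  have hw : sμ⁻¹ ≠ 0 := inv_ne_zero hsμ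
  have hq := derivative_cuspSummand_ne_zero (ha 1) (sij 1)
  rcases Nat.eq_one_or_eq_two_of_one_lt_inv_add_inv_add_inv (ha 0) hord.1 hord.2 hχ with
    h₀ | ⟨h₀, h₁, h₁₂⟩
  · rw [h₀, derivative_cuspSummand_one]
    exact cuspCriticalSet_finite_of_const one_ne_zero hw hq _
  · rw [h₀, derivative_cuspSummand_two]
    refine cuspCriticalSet_finite_of_linear two_ne_zero hw hq ?_
      (derivative_cuspSummand_ne_zero (ha 2) (sij 2)) ?_
    all_goals simp only [natDegree_derivative_cuspSummand]; omega
end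

section
/- For every choice of complex numbers s_{i,j} (i = 1,2,3, 1 ≤ j ≤ a_i−1), the ℂ-algebra ℂ[x_1,x_2,x_3]/(x_2x_3, x_3x_1, x_1x_2, H_1(x,s), H_2(x,s)) is a ℂ-vector space of dimension μ_A. In particular (taking all s_{i,j} = 0), dim_ℂ ℂ[x_1,x_2,x_3]/(x_2x_3, x_3x_1, x_1x_2, a_1x_1^{a_1} − a_2x_2^{a_2}, a_2x_2^{a_2} − a_3x_3^{a_3}) = μ_A = a_1 + a_2 + a_3 − 1. -/
open MvPolynomial
open scoped Polynomial

/-!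
Modulo the monomials `xᵢxⱼ` (`i ≠ j`) a polynomial is a constant plus one-variable polynomials
`qᵢ(xᵢ)`; in the quotient all `Pᵢ(xᵢ)` have a common class `h`, while `xᵢPᵢ(xᵢ) ≡ xᵢPⱼ(xⱼ) ≡ 0`.
Dividing each `qᵢ` by `Pᵢ` therefore shows that `1`, `h` and the `xᵢⁿ` with `1 ≤ n < deg Pᵢ` span
the quotient. They are independent because any values prescribed on them are taken by a functional
vanishing on the ideal, namely `p ↦ Σᵢ ψᵢ(p(0,…,xᵢ,…,0))` where `ψᵢ(r·Pᵢ) = γ·r(0)` for one `γ`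
and all `i`: on `K[X]` the values of such a `ψᵢ` on `Xⁿ`, `n < deg Pᵢ`, are free, and they
determine its values on higher powers through a linear recurrence. For
`Pᵢ = aᵢXᵃⁱ + Σⱼ j·sᵢⱼ·Xʲ` the dimension `2 + Σᵢ (aᵢ - 1)` is `a₁ + a₂ + a₃ - 1`.
-/

/-- The polynomial `aᵢ xᵢ^{aᵢ} + Σ_{j=1}^{aᵢ−1} j·s_{i,j}·xᵢʲ` in `ℂ[x₁,x₂,x₃]`, so that
`H₁(x,s) = hpart 0 − hpart 1` and `H₂(x,s) = hpart 1 − hpart 2`. -/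
noncomputable def hpart (a : Fin 3 → ℕ) (sij : Fin 3 → ℕ → ℂ) (i : Fin 3) :
    MvPolynomial (Fin 3) ℂ :=
  (a i : MvPolynomial (Fin 3) ℂ) * X i ^ a i
    + ∑ j ∈ Finset.Ico 1 (a i), (j : MvPolynomial (Fin 3) ℂ) * C (sij i j) * X i ^ j

theorem Ideal.apply_eq_zero_of_mem_span {R M : Type*} [CommSemiring R] [AddCommMonoid M]
    (L : R →+ M) {S : Set R} (h : ∀ g ∈ S, ∀ q, L (q * g) = 0) {p : R}
    (hp : p ∈ Ideal.span S) : L p = 0 := by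
  suffices ∀ q, L (q * p) = 0 by simpa using this 1
  induction hp using Submodule.span_induction with
  | mem g hg => exact h g hg
  | zero => simp
  | add x y _ _ hx hy => intro q; rw [mul_add, map_add, hx, hy, add_zero]
  | smul r x _ hx => intro q; rw [smul_eq_mul, ← mul_assoc, hx]

namespace Polynomial

variable {K : Type*} [Field K]

/-- The recurrence `∑ⱼ P.coeff j * c (k + j) = f k`, solved for its top term `c (k + deg P)`. -/
noncomputable def recurrenceSeq (P : K[X]) (d f : ℕ → K) (n : ℕ) : K :=
  if n < P.natDegree then d n
  else (f (n - P.natDegree) -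
      ∑ j : Fin P.natDegree, P.coeff j * recurrenceSeq P d f (n - P.natDegree + j)) /
    P.leadingCoeff
termination_by n
decreasing_by omega

theorem recurrenceSeq_of_lt (P : K[X]) (d f : ℕ → K) {n : ℕ} (hn : n < P.natDegree) :
    recurrenceSeq P d f n = d n := by
  rw [recurrenceSeq, if_pos hn]

theorem sum_coeff_mul_recurrenceSeq {P : K[X]} (hP : P ≠ 0) (d f : ℕ → K) (k : ℕ) :
    ∑ j ∈ Finset.range (P.natDegree + 1), P.coeff j * recurrenceSeq P d f (k + j) = f k := by
  have hlast : P.leadingCoeff * recurrenceSeq P d f (k + P.natDegree) =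
      f k - ∑ j : Fin P.natDegree, P.coeff j * recurrenceSeq P d f (k + j) := by
    rw [recurrenceSeq, if_neg (by omega), Nat.add_sub_cancel,
      mul_div_cancel₀ _ (leadingCoeff_ne_zero.mpr hP)]
  rw [Finset.sum_range_succ, ← Fin.sum_univ_eq_sum_range, ← leadingCoeff, hlast]
  abel

theorem exists_linearMap_comp_mulRight_eq {P : K[X]} (hP : P ≠ 0) (d : ℕ → K)
    (φ : K[X] →ₗ[K] K) :
    ∃ ψ : K[X] →ₗ[K] K, (∀ n < P.natDegree, ψ (X ^ n) = d n) ∧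
      ψ ∘ₗ LinearMap.mulRight K P = φ := by
  set c := recurrenceSeq P d (fun k => φ (X ^ k))
  set ψ := (basisMonomials K).constr K c
  have hψ (a : K) (n : ℕ) : ψ (C a * X ^ n) = a * c n := by
    have h := (basisMonomials K).constr_basis K c n
    simp only [coe_basisMonomials, monomial_one_right_eq_X_pow] at h
    rw [C_mul', map_smul, h, smul_eq_mul]
  refine ⟨ψ, fun n hn => ?_, (basisMonomials K).ext fun k => ?_⟩
  · simpa [c, recurrenceSeq_of_lt _ _ _ hn] using hψ 1 n
  · simp only [LinearMap.comp_apply, LinearMap.mulRight_apply, coe_basisMonomials,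
      monomial_one_right_eq_X_pow]
    conv_lhs => rw [as_sum_range_C_mul_X_pow P]
    simp only [Finset.mul_sum, map_sum]
    rw [← sum_coeff_mul_recurrenceSeq hP d (fun k => φ (X ^ k)) k]
    refine Finset.sum_congr rfl fun j _ => ?_
    rw [mul_left_comm, ← pow_add, hψ]

end Polynomial

namespace MvPolynomial

variable {K σ : Type*} [Field K]

noncomputable def limitJacobianIdeal (P : σ → K[X]) : Ideal (MvPolynomial σ K) :=
  Ideal.span ({p | ∃ i j, i ≠ j ∧ p = X i * X j} ∪
    {p | ∃ i j, p = Polynomial.aeval (X i) (P i) - Polynomial.aeval (X j) (P j)})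

section Ideal

variable (P : σ → K[X])

theorem X_mul_X_mem_limitJacobianIdeal {i j : σ} (hij : i ≠ j) :
    X i * X j ∈ limitJacobianIdeal P :=
  Ideal.subset_span (Or.inl ⟨i, j, hij, rfl⟩)

theorem aeval_sub_aeval_mem_limitJacobianIdeal (i j : σ) :
    Polynomial.aeval (X i) (P i) - Polynomial.aeval (X j) (P j) ∈ limitJacobianIdeal P :=
  Ideal.subset_span (Or.inr ⟨i, j, rfl⟩)

theorem monomial_mem_limitJacobianIdeal {m : σ →₀ ℕ} {i j : σ} (hij : i ≠ j)
    (hi : m i ≠ 0) (hj : m j ≠ 0) (c : K) : monomial m c ∈ limitJacobianIdeal P := by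
  classical
  refine Ideal.mem_of_dvd _ ?_ (X_mul_X_mem_limitJacobianIdeal P hij)
  rw [X, X, monomial_mul, monomial_dvd_monomial]
  refine ⟨Or.inr fun k => ?_, by simp⟩
  simp only [Finsupp.add_apply, Finsupp.single_apply]
  split_ifs <;> subst_vars <;> first | omega | exact absurd rfl hij

theorem X_mul_aeval_mem_limitJacobianIdeal [Nontrivial σ] (hP0 : ∀ i, (P i).coeff 0 = 0)
    (i : σ) : X i * Polynomial.aeval (X i) (P i) ∈ limitJacobianIdeal P := by
  obtain ⟨j, hji⟩ := exists_ne i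
  obtain ⟨Q, hQ⟩ := Polynomial.X_dvd_iff.mpr (hP0 j)
  have hj : X i * Polynomial.aeval (X j) (P j) ∈ limitJacobianIdeal P := by
    rw [hQ, map_mul, Polynomial.aeval_X, ← mul_assoc]
    exact Ideal.mul_mem_right _ _ (X_mul_X_mem_limitJacobianIdeal P hji.symm)
  have h := Ideal.add_mem _
    (Ideal.mul_mem_left _ (X i) (aeval_sub_aeval_mem_limitJacobianIdeal P i j)) hj
  rwa [← mul_add, sub_add_cancel] at h

end Ideal

abbrev LimitJacobianIndex (P : σ → K[X]) : Type _ :=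
  Option (Option (Σ i, Fin ((P i).natDegree - 1)))

noncomputable def limitJacobianFamily (P : σ → K[X]) (i₀ : σ) :
    LimitJacobianIndex P → MvPolynomial σ K ⧸ limitJacobianIdeal P
  | none => 1
  | some none => Ideal.Quotient.mkₐ K _ (Polynomial.aeval (X i₀) (P i₀))
  | some (some ⟨i, n⟩) => Ideal.Quotient.mkₐ K _ (X i ^ (n.1 + 1))

section Span

variable {P : σ → K[X]} (i₀ : σ)

local notation "π" => Ideal.Quotient.mkₐ K (limitJacobianIdeal P)
local notation "𝓥" => Submodule.span K (Set.range (limitJacobianFamily P i₀))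

theorem mk_X_pow_mem_span_limitJacobianFamily {i : σ} {n : ℕ} (hn : n < (P i).natDegree) :
    π (X i ^ n) ∈ 𝓥 := by
  refine Submodule.subset_span ?_
  rcases n with _ | n
  · exact ⟨none, by simp [limitJacobianFamily]⟩
  · exact ⟨some (some ⟨i, n, by omega⟩), rfl⟩

theorem mk_aeval_mem_span_limitJacobianFamily_of_natDegree_lt {i : σ} {q : K[X]}
    (hq : q.natDegree < (P i).natDegree) :
    π (Polynomial.aeval (X i) q) ∈ 𝓥 := by
  rw [Polynomial.aeval_eq_sum_range' hq, map_sum]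
  refine Submodule.sum_mem _ fun n hn => ?_
  rw [map_smul]
  exact Submodule.smul_mem _ _ (mk_X_pow_mem_span_limitJacobianFamily i₀ (by simpa using hn))

theorem mk_aeval_mem_span_limitJacobianFamily [Nontrivial σ]
    (hdeg : ∀ i, 0 < (P i).natDegree) (hP0 : ∀ i, (P i).coeff 0 = 0) (i : σ) (q : K[X]) :
    π (Polynomial.aeval (X i) q) ∈ 𝓥 := by
  set Q := q / P i
  set R := q % P i
  have hq : q = P i * (Polynomial.C (Q.coeff 0) + Polynomial.X * Q.divX) + R := by
    rw [add_comm (Polynomial.C _), Polynomial.X_mul_divX_add, EuclideanDomain.div_add_mod]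
  have hdiff : Polynomial.aeval (X i : MvPolynomial σ K) q -
      (Q.coeff 0 • Polynomial.aeval (X i₀) (P i₀) + Polynomial.aeval (X i) R) =
      Q.coeff 0 • (Polynomial.aeval (X i) (P i) - Polynomial.aeval (X i₀) (P i₀)) +
        X i * Polynomial.aeval (X i) (P i) * Polynomial.aeval (X i) Q.divX := by
    conv_lhs => rw [hq]
    simp only [map_add, map_mul, Polynomial.aeval_C, Polynomial.aeval_X, smul_eq_C_mul,
      algebraMap_eq]
    ring
  have hmk : π (Polynomial.aeval (X i) q) =
      π (Q.coeff 0 • Polynomial.aeval (X i₀) (P i₀) + Polynomial.aeval (X i) R) := by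
    rw [Ideal.Quotient.mkₐ_eq_mk, Ideal.Quotient.eq, hdiff]
    exact add_mem
      (Submodule.smul_of_tower_mem _ _ (aeval_sub_aeval_mem_limitJacobianIdeal P i i₀))
      (Ideal.mul_mem_right _ _ (X_mul_aeval_mem_limitJacobianIdeal P hP0 i))
  rw [hmk, map_add, map_smul]
  exact add_mem (Submodule.smul_mem _ _ (Submodule.subset_span ⟨some none, rfl⟩))
    (mk_aeval_mem_span_limitJacobianFamily_of_natDegree_lt i₀
      (Polynomial.natDegree_mod_lt _ (hdeg i).ne'))

theorem mk_monomial_mem_span_limitJacobianFamily [Nontrivial σ]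
    (hdeg : ∀ i, 0 < (P i).natDegree) (hP0 : ∀ i, (P i).coeff 0 = 0) (m : σ →₀ ℕ) (c : K) :
    π (monomial m c) ∈ 𝓥 := by
  by_cases hm : m.support.card ≤ 1
  · obtain ⟨i, hi⟩ := Finsupp.card_support_le_one.mp hm
    rw [hi, ← C_mul_X_pow_eq_monomial, ← algebraMap_eq, ← Polynomial.aeval_monomial]
    exact mk_aeval_mem_span_limitJacobianFamily i₀ hdeg hP0 i _
  · obtain ⟨i, hi, j, hj, hij⟩ := Finset.one_lt_card.mp (not_le.mp hm)
    rw [Ideal.Quotient.mkₐ_eq_mk, Ideal.Quotient.eq_zero_iff_mem.mpr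
      (monomial_mem_limitJacobianIdeal P hij (Finsupp.mem_support_iff.mp hi)
        (Finsupp.mem_support_iff.mp hj) c)]
    exact zero_mem _

theorem top_le_span_limitJacobianFamily [Nontrivial σ] (hdeg : ∀ i, 0 < (P i).natDegree)
    (hP0 : ∀ i, (P i).coeff 0 = 0) : ⊤ ≤ 𝓥 := by
  rintro _ -
  obtain ⟨p, rfl⟩ := Ideal.Quotient.mkₐ_surjective K (limitJacobianIdeal P) ‹_›
  induction p using MvPolynomial.induction_on' with
  | monomial m c => exact mk_monomial_mem_span_limitJacobianFamily i₀ hdeg hP0 m c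
  | add p q hp hq => rw [map_add]; exact add_mem hp hq

end Span

section Dual

variable {P : σ → K[X]}

noncomputable def axisRestriction [DecidableEq σ] (i : σ) : MvPolynomial σ K →ₐ[K] K[X] :=
  aeval (Pi.single i Polynomial.X)

section axisRestriction

variable [DecidableEq σ]

theorem axisRestriction_X (i j : σ) :
    axisRestriction i (X j : MvPolynomial σ K) = if j = i then Polynomial.X else 0 := by
  simp [axisRestriction, Pi.single_apply]

theorem axisRestriction_aeval_X {Q : K[X]} (hQ : Q.coeff 0 = 0) (i j : σ) :
    axisRestriction i (Polynomial.aeval (X j) Q) = if j = i then Q else 0 := by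
  rw [← Polynomial.aeval_algHom_apply, axisRestriction_X]
  split_ifs
  · exact Polynomial.aeval_X_left_apply Q
  · rw [← Polynomial.coeff_zero_eq_aeval_zero', hQ, map_zero]

theorem eval_zero_axisRestriction (i : σ) (q : MvPolynomial σ K) :
    (axisRestriction i q).eval 0 = constantCoeff q := by
  have h : (Polynomial.evalRingHom 0).comp (axisRestriction (K := K) i).toRingHom =
      constantCoeff := by
    refine ringHom_ext (fun r => by simp) fun j => ?_
    change (axisRestriction i (X j)).eval 0 = _
    rw [axisRestriction_X]
    split_ifs <;> simp
  exact RingHom.congr_fun h q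

end axisRestriction

theorem exists_linearMap_limitJacobianIdeal [Fintype σ] (hdeg : ∀ i, 0 < (P i).natDegree)
    (hP0 : ∀ i, (P i).coeff 0 = 0) (γ : K) (d : σ → ℕ → K) :
    ∃ L : MvPolynomial σ K →ₗ[K] K, (∀ p ∈ limitJacobianIdeal P, L p = 0) ∧
      L 1 = ∑ i, d i 0 ∧ (∀ i, L (Polynomial.aeval (X i) (P i)) = γ) ∧
      ∀ i n, 0 < n → n < (P i).natDegree → L (X i ^ n) = d i n := by
  classical
  choose ψ hψd hψP using fun i => Polynomial.exists_linearMap_comp_mulRight_eq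
    (Polynomial.ne_zero_of_natDegree_gt (hdeg i)) (d i) (γ • Polynomial.leval (0 : K))
  set L := ∑ i, ψ i ∘ₗ (axisRestriction i).toLinearMap
  have hL (p : MvPolynomial σ K) : L p = ∑ i, ψ i (axisRestriction i p) := by simp [L]
  have hL_mul_aeval (q : MvPolynomial σ K) (i : σ) :
      L (q * Polynomial.aeval (X i) (P i)) = γ * constantCoeff q := by
    rw [hL, Finset.sum_eq_single i]
    · rw [map_mul, axisRestriction_aeval_X (hP0 i), if_pos rfl,
        ← LinearMap.mulRight_apply (R := K), ← LinearMap.comp_apply, hψP]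
      simp [eval_zero_axisRestriction]
    · intro j _ hji
      rw [map_mul, axisRestriction_aeval_X (hP0 i), if_neg hji.symm, mul_zero, map_zero]
    · simp
  have hL_mul_X_mul_X (q : MvPolynomial σ K) {i j : σ} (hij : i ≠ j) :
      L (q * (X i * X j)) = 0 := by
    rw [hL]
    refine Finset.sum_eq_zero fun k _ => ?_
    simp only [map_mul, axisRestriction_X]
    split_ifs <;> simp_all
  refine ⟨L, fun p hp => ?_, ?_, fun i => by simpa using hL_mul_aeval 1 i, fun i n hn hnd => ?_⟩
  · refine Ideal.apply_eq_zero_of_mem_span L.toAddMonoidHom ?_ hp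
    rintro g (⟨i, j, hij, rfl⟩ | ⟨i, j, rfl⟩) q
    · exact hL_mul_X_mul_X q hij
    · simp [mul_sub, hL_mul_aeval]
  · simp only [hL, map_one]
    exact Finset.sum_congr rfl fun i _ => by simpa using hψd i 0 (hdeg i)
  · rw [hL, Finset.sum_eq_single i]
    · simp [axisRestriction_X, hψd i n hnd]
    · intro j _ hji
      simp [axisRestriction_X, hji.symm, zero_pow hn.ne']
    · simp

theorem exists_linearMap_comp_limitJacobianFamily [Fintype σ] (i₀ : σ)
    (hdeg : ∀ i, 0 < (P i).natDegree) (hP0 : ∀ i, (P i).coeff 0 = 0)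
    (t : LimitJacobianIndex P → K) :
    ∃ f : (MvPolynomial σ K ⧸ limitJacobianIdeal P) →ₗ[K] K,
      ∀ y, f (limitJacobianFamily P i₀ y) = t y := by
  classical
  -- `L 1 = ∑ i, d i 0`, so the value on `1` is carried by `d i₀ 0`.
  let d (i : σ) (n : ℕ) : K :=
    if n = 0 then (if i = i₀ then t none else 0)
    else if h : n - 1 < (P i).natDegree - 1 then t (some (some ⟨i, n - 1, h⟩)) else 0
  obtain ⟨L, hLJ, hL1, hLP, hLX⟩ :=
    exists_linearMap_limitJacobianIdeal hdeg hP0 (t (some none)) d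
  refine ⟨Submodule.liftQ ((limitJacobianIdeal P).restrictScalars K) L hLJ ∘ₗ
    (Submodule.Quotient.restrictScalarsEquiv K _).symm.toLinearMap, ?_⟩
  rintro (_ | _ | ⟨i, n⟩)
  · exact hL1.trans (by simp [d])
  · exact hLP i₀
  · exact (hLX i (n + 1) n.1.succ_pos (by omega)).trans (by simp [d, n.2])

theorem linearIndependent_limitJacobianFamily [Fintype σ] (i₀ : σ)
    (hdeg : ∀ i, 0 < (P i).natDegree) (hP0 : ∀ i, (P i).coeff 0 = 0) :
    LinearIndependent K (limitJacobianFamily P i₀) := by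
  classical
  choose F hF using exists_linearMap_comp_limitJacobianFamily i₀ hdeg hP0
  exact .of_pairwise_dual_eq_zero_one _ (fun x => F (Pi.single x 1))
    (fun x y hxy => by simp [hF, hxy.symm]) (fun x => by simp [hF])

end Dual

noncomputable def limitJacobianBasis [Fintype σ] [Nontrivial σ] {P : σ → K[X]} (i₀ : σ)
    (hdeg : ∀ i, 0 < (P i).natDegree) (hP0 : ∀ i, (P i).coeff 0 = 0) :
    Module.Basis (LimitJacobianIndex P) K (MvPolynomial σ K ⧸ limitJacobianIdeal P) :=
  .mk (linearIndependent_limitJacobianFamily i₀ hdeg hP0)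
    (top_le_span_limitJacobianFamily i₀ hdeg hP0)

theorem finrank_quotient_limitJacobianIdeal [Fintype σ] [Nontrivial σ] {P : σ → K[X]}
    (hdeg : ∀ i, 0 < (P i).natDegree) (hP0 : ∀ i, (P i).coeff 0 = 0) :
    FiniteDimensional K (MvPolynomial σ K ⧸ limitJacobianIdeal P) ∧
      Module.finrank K (MvPolynomial σ K ⧸ limitJacobianIdeal P) =
        2 + ∑ i, ((P i).natDegree - 1) := by
  obtain ⟨i₀⟩ : Nonempty σ := inferInstance
  let b := limitJacobianBasis i₀ hdeg hP0
  refine ⟨b.finiteDimensional_of_finite, ?_⟩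
  rw [Module.finrank_eq_card_basis b]
  simp [Fintype.card_option, Fintype.card_sigma]
  ring

theorem limitJacobianIdeal_fin_three (P : Fin 3 → K[X]) :
    limitJacobianIdeal P = Ideal.span {(X 1 * X 2 : MvPolynomial (Fin 3) K), X 2 * X 0, X 0 * X 1,
      Polynomial.aeval (X 0) (P 0) - Polynomial.aeval (X 1) (P 1),
      Polynomial.aeval (X 1) (P 1) - Polynomial.aeval (X 2) (P 2)} := by
  set I := Ideal.span {(X 1 * X 2 : MvPolynomial (Fin 3) K), X 2 * X 0, X 0 * X 1,
      Polynomial.aeval (X 0) (P 0) - Polynomial.aeval (X 1) (P 1),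
      Polynomial.aeval (X 1) (P 1) - Polynomial.aeval (X 2) (P 2)}
  have hXX (i j : Fin 3) (hij : i ≠ j) : X i * X j ∈ I := by
    have h12 : X 1 * X 2 ∈ I := Ideal.subset_span (by simp)
    have h20 : X 2 * X 0 ∈ I := Ideal.subset_span (by simp)
    have h01 : X 0 * X 1 ∈ I := Ideal.subset_span (by simp)
    fin_cases i <;> fin_cases j <;>
      first | exact absurd rfl hij | assumption | (rw [mul_comm]; assumption)
  have hP (i : Fin 3) :
      Polynomial.aeval (X i) (P i) - Polynomial.aeval (X 1) (P 1) ∈ I := by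
    fin_cases i
    · exact Ideal.subset_span (by simp)
    · simp
    · rw [← neg_sub]
      exact I.neg_mem (Ideal.subset_span (by simp))
  refine le_antisymm (Ideal.span_le.mpr ?_) (Ideal.span_le.mpr ?_)
  · rintro g (⟨i, j, hij, rfl⟩ | ⟨i, j, rfl⟩)
    · exact hXX i j hij
    · simpa using I.sub_mem (hP i) (hP j)
  · rintro g (rfl | rfl | rfl | rfl | rfl)
    · exact X_mul_X_mem_limitJacobianIdeal P (by decide)
    · exact X_mul_X_mem_limitJacobianIdeal P (by decide)
    · exact X_mul_X_mem_limitJacobianIdeal P (by decide)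
    · exact aeval_sub_aeval_mem_limitJacobianIdeal P 0 1
    · exact aeval_sub_aeval_mem_limitJacobianIdeal P 1 2

end MvPolynomial

section hpartPoly

variable {K : Type*} [Field K]

noncomputable def hpartPoly (A : ℕ) (s : ℕ → K) : K[X] :=
  Polynomial.C (A : K) * Polynomial.X ^ A +
    ∑ j ∈ Finset.Ico 1 A, Polynomial.C (j * s j) * Polynomial.X ^ j

open Polynomial in
theorem coeff_zero_hpartPoly (A : ℕ) (s : ℕ → K) : (hpartPoly A s).coeff 0 = 0 := by
  rcases A.eq_zero_or_pos with rfl | hA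
  · simp [hpartPoly]
  · simp [hpartPoly, finsetSum_coeff, hA.ne]

open Polynomial in
theorem natDegree_hpartPoly [CharZero K] {A : ℕ} (hA : 0 < A) (s : ℕ → K) :
    (hpartPoly A s).natDegree = A := by
  refine natDegree_eq_of_le_of_coeff_ne_zero ?_ ?_
  · refine (natDegree_add_le _ _).trans (max_le (natDegree_C_mul_X_pow_le _ _)
      (natDegree_sum_le_of_forall_le _ _ fun j hj => ?_))
    exact (natDegree_C_mul_X_pow_le _ _).trans (Finset.mem_Ico.mp hj).2.le
  · rw [hpartPoly, Polynomial.coeff_add, finsetSum_coeff, coeff_C_mul_X_pow, if_pos rfl,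
      Finset.sum_eq_zero fun j hj => by
        rw [coeff_C_mul_X_pow, if_neg (Finset.mem_Ico.mp hj).2.ne']]
    simpa using hA.ne'

end hpartPoly

theorem hpart_eq_aeval_hpartPoly (a : Fin 3 → ℕ) (sij : Fin 3 → ℕ → ℂ) (i : Fin 3) :
    hpart a sij i = Polynomial.aeval (X i) (hpartPoly (a i) (sij i)) := by
  simp [hpart, hpartPoly, algebraMap_eq, mul_assoc]

theorem finrank_quotient_span_hpart (a : Fin 3 → ℕ) (ha : ∀ i, 0 < a i)
    (sij : Fin 3 → ℕ → ℂ) :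
    FiniteDimensional ℂ
        (MvPolynomial (Fin 3) ℂ ⧸
          Ideal.span {X 1 * X 2, X 2 * X 0, X 0 * X 1,
            hpart a sij 0 - hpart a sij 1, hpart a sij 1 - hpart a sij 2}) ∧
      Module.finrank ℂ
          (MvPolynomial (Fin 3) ℂ ⧸
            Ideal.span {X 1 * X 2, X 2 * X 0, X 0 * X 1,
              hpart a sij 0 - hpart a sij 1, hpart a sij 1 - hpart a sij 2}) =
        a 0 + a 1 + a 2 - 1 := by
  have hnatDeg (i : Fin 3) : (hpartPoly (a i) (sij i)).natDegree = a i :=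
    natDegree_hpartPoly (ha i) _
  have hI := limitJacobianIdeal_fin_three fun i => hpartPoly (a i) (sij i)
  rw [show hpart a sij = _ from funext (hpart_eq_aeval_hpartPoly a sij)]
  beta_reduce at hI ⊢
  rw [← hI]
  obtain ⟨hfin, hrank⟩ := finrank_quotient_limitJacobianIdeal
    (fun i => (hnatDeg i).symm ▸ ha i) fun i => coeff_zero_hpartPoly (a i) (sij i)
  refine ⟨hfin, hrank.trans ?_⟩
  simp only [hnatDeg, Fin.sum_univ_three]
  have := ha 0; have := ha 1; have := ha 2
  omega

theorem limit_jacobianRing_finrank_general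
    (a : Fin 3 → ℕ) (ha : ∀ i, 0 < a i)
    (sij : Fin 3 → ℕ → ℂ) :
    (FiniteDimensional ℂ
        (MvPolynomial (Fin 3) ℂ ⧸
          Ideal.span {X 1 * X 2, X 2 * X 0, X 0 * X 1,
            hpart a sij 0 - hpart a sij 1, hpart a sij 1 - hpart a sij 2}) ∧
      Module.finrank ℂ
          (MvPolynomial (Fin 3) ℂ ⧸
            Ideal.span {X 1 * X 2, X 2 * X 0, X 0 * X 1,
              hpart a sij 0 - hpart a sij 1, hpart a sij 1 - hpart a sij 2}) =
        a 0 + a 1 + a 2 - 1) ∧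
    (FiniteDimensional ℂ
        (MvPolynomial (Fin 3) ℂ ⧸
          Ideal.span {(X 1 * X 2 : MvPolynomial (Fin 3) ℂ), X 2 * X 0, X 0 * X 1,
            (a 0 : MvPolynomial (Fin 3) ℂ) * X 0 ^ a 0
              - (a 1 : MvPolynomial (Fin 3) ℂ) * X 1 ^ a 1,
            (a 1 : MvPolynomial (Fin 3) ℂ) * X 1 ^ a 1
              - (a 2 : MvPolynomial (Fin 3) ℂ) * X 2 ^ a 2}) ∧
      Module.finrank ℂ
          (MvPolynomial (Fin 3) ℂ ⧸
            Ideal.span {(X 1 * X 2 : MvPolynomial (Fin 3) ℂ), X 2 * X 0, X 0 * X 1,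
              (a 0 : MvPolynomial (Fin 3) ℂ) * X 0 ^ a 0
                - (a 1 : MvPolynomial (Fin 3) ℂ) * X 1 ^ a 1,
              (a 1 : MvPolynomial (Fin 3) ℂ) * X 1 ^ a 1
                - (a 2 : MvPolynomial (Fin 3) ℂ) * X 2 ^ a 2}) =
        a 0 + a 1 + a 2 - 1) := by
  have hzero : hpart a (fun _ _ => 0) = fun i => (a i : MvPolynomial (Fin 3) ℂ) * X i ^ a i := by
    ext1 i
    simp [hpart]
  have hs0 := finrank_quotient_span_hpart a ha fun _ _ => 0
  rw [hzero] at hs0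
  exact ⟨finrank_quotient_span_hpart a ha sij, hs0⟩

/-- For every choice of the parameters `s_{i,j}`, the algebra
`ℂ[x₁,x₂,x₃]/(x₂x₃, x₃x₁, x₁x₂, H₁(x,s), H₂(x,s))` has dimension `μ_A = a₁+a₂+a₃−1` over `ℂ`;
in particular (at `s = 0`) so does
`ℂ[x₁,x₂,x₃]/(x₂x₃, x₃x₁, x₁x₂, a₁x₁^{a₁} − a₂x₂^{a₂}, a₂x₂^{a₂} − a₃x₃^{a₃})`. -/
theorem limit_jacobianRing_finrank
    (a : Fin 3 → ℕ) (ha : ∀ i, 0 < a i)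
    (hord : a 0 ≤ a 1 ∧ a 1 ≤ a 2)
    (hχ : 1 < (1 : ℚ) / (a 0) + 1 / (a 1) + 1 / (a 2))
    (sij : Fin 3 → ℕ → ℂ) :
    (FiniteDimensional ℂ
        (MvPolynomial (Fin 3) ℂ ⧸
          Ideal.span {X 1 * X 2, X 2 * X 0, X 0 * X 1,
            hpart a sij 0 - hpart a sij 1, hpart a sij 1 - hpart a sij 2}) ∧
      Module.finrank ℂ
          (MvPolynomial (Fin 3) ℂ ⧸
            Ideal.span {X 1 * X 2, X 2 * X 0, X 0 * X 1,
              hpart a sij 0 - hpart a sij 1, hpart a sij 1 - hpart a sij 2}) =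
        a 0 + a 1 + a 2 - 1) ∧
    (FiniteDimensional ℂ
        (MvPolynomial (Fin 3) ℂ ⧸
          Ideal.span {(X 1 * X 2 : MvPolynomial (Fin 3) ℂ), X 2 * X 0, X 0 * X 1,
            (a 0 : MvPolynomial (Fin 3) ℂ) * X 0 ^ a 0
              - (a 1 : MvPolynomial (Fin 3) ℂ) * X 1 ^ a 1,
            (a 1 : MvPolynomial (Fin 3) ℂ) * X 1 ^ a 1
              - (a 2 : MvPolynomial (Fin 3) ℂ) * X 2 ^ a 2}) ∧
      Module.finrank ℂ
          (MvPolynomial (Fin 3) ℂ ⧸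
            Ideal.span {(X 1 * X 2 : MvPolynomial (Fin 3) ℂ), X 2 * X 0, X 0 * X 1,
              (a 0 : MvPolynomial (Fin 3) ℂ) * X 0 ^ a 0
                - (a 1 : MvPolynomial (Fin 3) ℂ) * X 1 ^ a 1,
              (a 1 : MvPolynomial (Fin 3) ℂ) * X 1 ^ a 1
                - (a 2 : MvPolynomial (Fin 3) ℂ) * X 2 ^ a 2}) =
        a 0 + a 1 + a 2 - 1) :=
  limit_jacobianRing_finrank_general a ha sij
end
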